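/- arXiv:1604.06697 — 3 statements merged into one kernel-verified Lean document; each statement's English description precedes it below -/
import Mathlib

section
/- For a random permutation of n distinct elements, the probability that the median of the first, middle, and last elements equals the (k+1)-st smallest element is 6·k·(n−1−k)/(n·(n−1)·(n−2)) for 0 ≤ k ≤ n−1 and n ≥ 3. -/
/-!
A 3-subset whose median is `k` has the form `{a, k, b}` with `a < k < b`, so these subsets are in
bijection with pairs `(a, b)` taken below and above `k`: there are `k * (n - 1 - k)` of them among
`n.choose 3 = n (n - 1) (n - 2) / 6` subsets.
-/

open Finset

namespace Finset

variable {α : Type*} [LinearOrder α]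

theorem card_eq_card_filter_lt_add_card_filter_gt_add_one {S : Finset α} {k : α} (hk : k ∈ S) :
    #S = #(S.filter (· < k)) + #(S.filter (k < ·)) + 1 := by
  have hge : S.filter (fun x => ¬ x < k) = insert k (S.filter (k < ·)) := by
    ext x
    simp only [mem_filter, mem_insert, not_lt]
    grind
  rw [← card_filter_add_card_filter_not (· < k), hge,
    card_insert_of_notMem (by simp), add_assoc]

theorem eq_insert_filter_lt_union_filter_gt {S : Finset α} {k : α} (hk : k ∈ S) :
    S = insert k (S.filter (· < k) ∪ S.filter (k < ·)) := by
  ext x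
  simp only [mem_insert, mem_union, mem_filter]
  grind

variable {a k b : α}

theorem filter_lt_triple (hak : a < k) (hkb : k < b) :
    ({a, k, b} : Finset α).filter (· < k) = {a} := by
  ext x
  simp only [mem_filter, mem_insert, mem_singleton]
  grind

theorem filter_gt_triple (hak : a < k) (hkb : k < b) :
    ({a, k, b} : Finset α).filter (k < ·) = {b} := by
  ext x
  simp only [mem_filter, mem_insert, mem_singleton]
  grind

theorem card_triple (hak : a < k) (hkb : k < b) : #({a, k, b} : Finset α) = 3 :=
  card_eq_three.mpr ⟨a, k, b, hak.ne, (hak.trans hkb).ne, hkb.ne, rfl⟩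

theorem card_powersetCard_three_filter_median {s : Finset α} (hk : k ∈ s) :
    #((s.powersetCard 3).filter (fun S => k ∈ S ∧ #(S.filter (· < k)) = 1)) =
      #(s.filter (· < k)) * #(s.filter (k < ·)) := by
  rw [← card_product]
  symm
  apply card_nbij (fun p => {p.1, k, p.2})
  · rintro ⟨a, b⟩ hab
    simp only [coe_product, coe_filter, Set.mem_prod, Set.mem_ofPred_eq] at hab
    obtain ⟨⟨ha, hak⟩, hb, hkb⟩ := hab
    simp only [coe_filter, mem_powersetCard, Set.mem_ofPred_eq, filter_lt_triple hak hkb,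
      card_triple hak hkb, card_singleton]
    simp [insert_subset_iff, ha, hb, hk]
  · rintro ⟨a, b⟩ hab ⟨c, d⟩ hcd h
    simp only [coe_product, coe_filter, Set.mem_prod, Set.mem_ofPred_eq] at hab hcd
    have hlt := congrArg (·.filter (· < k)) h
    have hgt := congrArg (·.filter (k < ·)) h
    simp only [filter_lt_triple hab.1.2 hab.2.2, filter_lt_triple hcd.1.2 hcd.2.2,
      filter_gt_triple hab.1.2 hab.2.2, filter_gt_triple hcd.1.2 hcd.2.2,
      singleton_inj] at hlt hgt
    rw [hlt, hgt]
  · intro S hS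
    simp only [coe_filter, mem_powersetCard, Set.mem_ofPred_eq] at hS
    obtain ⟨⟨hSs, hS3⟩, hkS, hlow⟩ := hS
    have hup : #(S.filter (k < ·)) = 1 := by
      have := card_eq_card_filter_lt_add_card_filter_gt_add_one hkS
      omega
    obtain ⟨a, ha⟩ := card_eq_one.mp hlow
    obtain ⟨b, hb⟩ := card_eq_one.mp hup
    have haS : a ∈ S ∧ a < k := mem_filter.mp (ha ▸ mem_singleton_self a)
    have hbS : b ∈ S ∧ k < b := mem_filter.mp (hb ▸ mem_singleton_self b)
    refine ⟨(a, b), ?_, ?_⟩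
    · simp [hSs haS.1, haS.2, hSs hbS.1, hbS.2]
    · rw [eq_insert_filter_lt_union_filter_gt hkS, ha, hb]
      ext x
      simp only [mem_insert, mem_union, mem_singleton]
      tauto

end Finset

theorem Nat.card_range_filter_lt {n k : ℕ} (hk : k ≤ n) : #((range n).filter (· < k)) = k := by
  rw [show (range n).filter (· < k) = range k by ext; simp; omega, card_range]

theorem Nat.card_range_filter_gt (n k : ℕ) : #((range n).filter (k < ·)) = n - 1 - k := by
  rw [show (range n).filter (k < ·) = Ioo k n by ext; simp; omega, Nat.card_Ioo]
  omega

theorem Nat.cast_choose_three {K : Type*} [Field K] [CharZero K] (n : ℕ) :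
    (n.choose 3 : K) = n * (n - 1) * (n - 2) / 6 := by
  rw [Nat.cast_choose_eq_descPochhammer_div, descPochhammer_eval_eq_prod_range]
  simp [prod_range_succ, Nat.factorial]

open Finset in
/-- Median-of-three pivot selection: the ranks of the three sampled elements
form a uniformly random 3-subset of `{0, …, n-1}`.  The probability that the
median of the sample has rank `k` (i.e. is the `(k+1)`-st smallest element) is
`6·k·(n-1-k) / (n·(n-1)·(n-2))`. -/
theorem median_of_three_rank_probability (n k : ℕ) (hn : 3 ≤ n) (hk : k ≤ n - 1) :
    ((((range n).powersetCard 3).filter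
        (fun S => k ∈ S ∧ (S.filter (fun x => x < k)).card = 1)).card : ℝ)
      / (n.choose 3 : ℝ)
    = 6 * k * ((n : ℝ) - 1 - k) / ((n : ℝ) * ((n : ℝ) - 1) * ((n : ℝ) - 2)) := by
  have hkn : k ∈ range n := mem_range.mpr (by omega)
  rw [card_powersetCard_three_filter_median hkn, Nat.card_range_filter_lt (by omega),
    Nat.card_range_filter_gt, Nat.cast_choose_three]
  push_cast [Nat.sub_sub, Nat.cast_sub (by omega : 1 + k ≤ n)]
  rw [div_div_eq_mul_div]
  ring
end

section
/- If every comparison of a sorting algorithm is followed by a conditional branch depending on the comparison's outcome and the algorithm performs at most d·n·log₂ n comparisons, then under any fixed branch prediction the expected number of branch mispredictions on a uniformly random permutation is Ω(n·log_d n) (Brodal–Moruz trade-off, special case d ≥ 2 constant: Ω(n log n) mispredictions for O(n log n) comparisons). -/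
open Real Finset
open scoped Nat

/-! A tree of depth `D` has at most `∑_{i ≤ m} C(D, i) ≤ C(D + m, m) ≤ (e (D + m) / m) ^ m` leaves
with at most `m` mispredictions. For `m ≈ n log n / (64 log d)` and `D ≤ d n log₂ n` the base
`e (D + m) / m` is at most `d ^ 16`, so this count is at most `exp (n log n / 4) ≤ n! / 2` by
Stirling. Hence at least half of the `n!` leaves have more than `m` mispredictions (a Markov
count), and the average is at least `(m + 1) / 2`. -/

theorem sum_range_choose_le_add_choose (D m : ℕ) :
    ∑ i ∈ range (m + 1), D.choose i ≤ (D + m).choose m := by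
  induction m with
  | zero => simp
  | succ m ih =>
    rw [sum_range_succ, ← add_assoc, Nat.choose_succ_succ]
    exact add_le_add ih (Nat.choose_le_choose _ (Nat.le_add_right _ _))

theorem sum_range_choose_le_pow (D m : ℕ) :
    ∑ i ∈ range (m + 1), (D.choose i : ℝ) ≤ (exp 1 * (D + m) / m) ^ m := by
  obtain rfl | hm := Nat.eq_zero_or_pos m
  · simp
  have hmR : (0 : ℝ) < m := by exact_mod_cast hm
  have hfact : (m : ℝ) ^ m / m ! ≤ exp 1 ^ m := by
    rw [← exp_nat_mul, mul_one]; exact pow_div_factorial_le_exp _ hmR.le m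
  calc ∑ i ∈ range (m + 1), (D.choose i : ℝ)
      ≤ ((D + m).choose m : ℝ) := by exact_mod_cast sum_range_choose_le_add_choose D m
    _ ≤ (D + m : ℝ) ^ m / m ! := by exact_mod_cast Nat.choose_le_pow_div m (D + m)
    _ = (D + m : ℝ) ^ m / m ^ m * (m ^ m / m !) := by field_simp
    _ ≤ (D + m : ℝ) ^ m / m ^ m * exp 1 ^ m := by gcongr
    _ = (exp 1 * (D + m) / m) ^ m := by rw [mul_div_assoc, mul_pow, div_pow]; ring

theorem le_sum_of_card_filter_le {ι : Type*} [Fintype ι] (f : ι → ℕ) (m : ℕ) {B : ℝ}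
    (hB : (#{i | f i ≤ m} : ℝ) ≤ B) :
    (Fintype.card ι - B) * (m + 1) ≤ ∑ i, (f i : ℝ) := by
  have hsplit : #{i | f i ≤ m} + #{i | ¬f i ≤ m} = Fintype.card ι :=
    card_filter_add_card_filter_not _
  have hlarge : #{i | ¬f i ≤ m} • ((m : ℝ) + 1) ≤ ∑ i ∈ {i | ¬f i ≤ m}, (f i : ℝ) :=
    card_nsmul_le_sum _ _ _ fun i hi => by
      have : m + 1 ≤ f i := by simpa using hi
      exact_mod_cast this
  rw [nsmul_eq_mul] at hlarge
  calc (Fintype.card ι - B) * (m + 1) ≤ #{i | ¬f i ≤ m} * ((m : ℝ) + 1) := by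
        rw [← hsplit]; push_cast; gcongr; linarith
    _ ≤ ∑ i ∈ {i | ¬f i ≤ m}, (f i : ℝ) := hlarge
    _ ≤ ∑ i, (f i : ℝ) := sum_le_univ_sum_of_nonneg fun _ => Nat.cast_nonneg _

theorem two_mul_exp_le_factorial {n : ℕ} (hn : 8 ≤ n) : 2 * exp (n * log n / 4) ≤ n ! := by
  have hn0 : (8 : ℝ) ≤ n := by exact_mod_cast hn
  have hlog : 2 ≤ log n := by
    rw [le_log_iff_exp_le (by linarith)]
    calc exp 2 = exp 1 ^ 2 := by rw [← exp_nat_mul]; norm_num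
      _ ≤ 8 := by nlinarith [exp_pos 1, exp_one_lt_d9]
      _ ≤ n := hn0
  have hstirling := Stirling.le_log_factorial_stirling (n := n) (by omega)
  have hpi : 0 ≤ log (2 * π) := log_nonneg (by linarith [pi_gt_three])
  have hlog2 : log 2 < 1 := by linarith [log_two_lt_d9]
  calc 2 * exp (n * log n / 4) = exp (log 2 + n * log n / 4) := by
        rw [exp_add, exp_log two_pos]
    _ ≤ exp (log n !) := by gcongr; nlinarith
    _ = n ! := exp_log (by positivity)

theorem exp_one_mul_add_div_le_pow {d : ℝ} {n D m : ℕ} (hd : 2 ≤ d) (hm : 0 < m)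
    (hD : (D : ℝ) ≤ d * n * logb 2 n) (hm_le : 64 * log d * m ≤ n * log n)
    (hm_ge : n * log n ≤ 128 * log d * m) :
    exp 1 * (D + m) / m ≤ d ^ 16 := by
  have hlogd : 1 / 2 ≤ log d := by linarith [log_two_gt_d9, log_le_log two_pos hd]
  have hlogd_le : log d ≤ d := by linarith [log_le_sub_one_of_pos (by linarith : 0 < d)]
  have hlogb : logb 2 n ≤ 2 * log n := by
    rw [logb, div_le_iff₀ (log_pos one_lt_two)]
    nlinarith [log_two_gt_d9, log_natCast_nonneg n]
  have hD' : (D : ℝ) ≤ 2 * d * (n * log n) := by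
    nlinarith [mul_le_mul_of_nonneg_left hlogb (by positivity : (0 : ℝ) ≤ d * n)]
  have hm' : (m : ℝ) ≤ d * (n * log n) := by nlinarith
  have hnlog : n * log n ≤ 128 * d * m := hm_ge.trans (by gcongr)
  have hd14 : (2 : ℝ) ^ 14 ≤ d ^ 14 := by gcongr
  rw [div_le_iff₀ (by exact_mod_cast hm)]
  calc exp 1 * (D + m) ≤ 3 * (3 * d * (n * log n)) :=
        mul_le_mul (by linarith [exp_one_lt_d9]) (by linarith) (by positivity) (by norm_num)
    _ = 9 * d * (n * log n) := by ring
    _ ≤ 9 * d * (128 * d * m) := by gcongr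
    _ = 1152 * d ^ 2 * m := by ring
    _ ≤ d ^ 14 * d ^ 2 * m := by gcongr; linarith
    _ = d ^ 16 * m := by ring

theorem sum_range_choose_le_half_factorial {d : ℝ} {n D m : ℕ} (hd : 2 ≤ d) (hn : 8 ≤ n)
    (hm : 0 < m) (hD : (D : ℝ) ≤ d * n * logb 2 n) (hm_le : 64 * log d * m ≤ n * log n)
    (hm_ge : n * log n ≤ 128 * log d * m) :
    ∑ i ∈ range (m + 1), (D.choose i : ℝ) ≤ n ! / 2 := by
  calc ∑ i ∈ range (m + 1), (D.choose i : ℝ)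
      ≤ (exp 1 * (D + m) / m) ^ m := sum_range_choose_le_pow D m
    _ ≤ (d ^ 16) ^ m := by gcongr; exact exp_one_mul_add_div_le_pow hd hm hD hm_le hm_ge
    _ = exp (16 * log d * m) := by
        rw [← pow_mul, ← exp_log (by linarith : 0 < d), ← exp_nat_mul, exp_log (by linarith)]
        push_cast; ring_nf
    _ ≤ exp (n * log n / 4) := by gcongr; linarith
    _ ≤ n ! / 2 := by linarith [two_mul_exp_le_factorial hn]

open Finset in
/-- Brodal–Moruz trade-off: consider a comparison-based sorting algorithm
given as a decision tree with `n!` leaves and depth `D ≤ d·n·log₂ n` (so it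
performs at most `d·n·log₂ n` comparisons), where every comparison is followed
by a predicted conditional branch.  If `miss ℓ` denotes the number of
mispredicted branches on the path to leaf `ℓ`, and (as holds for any decision
tree) at most `∑_{i ≤ m} C(D, i)` leaves have `miss ≤ m`, then the average
number of branch mispredictions over a uniformly random permutation is
`Ω(n·log n / log d) = Ω(n·log_d n)`. -/
theorem brodal_moruz_lower_bound :
    ∃ c : ℝ, 0 < c ∧ ∃ n₀ : ℕ, ∀ d : ℝ, 2 ≤ d → ∀ n : ℕ, n₀ ≤ n →
      ∀ D : ℕ, (D : ℝ) ≤ d * n * Real.logb 2 n →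
      ∀ miss : Fin (n.factorial) → ℕ,
        (∀ m : ℕ, ((univ.filter (fun ℓ => miss ℓ ≤ m)).card : ℝ)
            ≤ ∑ i ∈ range (m + 1), (D.choose i : ℝ)) →
        c * ((n : ℝ) * Real.logb 2 n / Real.logb 2 d)
          ≤ (∑ ℓ, (miss ℓ : ℝ)) / (n.factorial : ℝ) := by
  refine ⟨1 / 128, by norm_num, 8, fun d hd n hn D hD miss hmiss => ?_⟩
  have hlogd : 0 < log d := log_pos (by linarith)
  set x := n * log n / (64 * log d) with hx_def
  set m := ⌊x⌋₊
  have hx : x < m + 1 := Nat.lt_floor_add_one x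
  have hS : ∑ i ∈ range (m + 1), (D.choose i : ℝ) ≤ n ! / 2 := by
    obtain hm | hm := Nat.eq_zero_or_pos m
    · have : (2 : ℝ) ≤ n ! := by exact_mod_cast (Nat.self_le_factorial n).trans' (by omega)
      simp only [hm, zero_add, range_one, sum_singleton, Nat.choose_zero_right, Nat.cast_one]
      linarith
    have hm_le : (m : ℝ) ≤ x := Nat.floor_le (by positivity)
    have hm_ge : x ≤ 2 * m := by linarith [(Nat.one_le_cast (α := ℝ)).2 hm]
    refine sum_range_choose_le_half_factorial hd hn hm hD ?_ ?_
    · rwa [hx_def, le_div_iff₀' (by positivity)] at hm_le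
    · rw [hx_def, div_le_iff₀ (by positivity)] at hm_ge; linarith
  have hcount := le_sum_of_card_filter_le miss m ((hmiss m).trans hS)
  rw [Fintype.card_fin] at hcount
  calc 1 / 128 * (n * logb 2 n / logb 2 d) = x / 2 := by
        rw [hx_def, ← log_div_log, ← log_div_log]; field_simp; ring
    _ ≤ (m + 1) / 2 := by linarith
    _ ≤ (∑ ℓ, (miss ℓ : ℝ)) / n ! := by
        rw [le_div_iff₀ (by positivity)]; linarith
end

section
/- Hoare's partitioning procedure is correct: upon termination it returns an index p such that every element at position < p is ≤ pivot and every element at position ≥ p is ≥ pivot, and the resulting array is a permutation of the input. -/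
/-! Outside the window `[l, r]` the array is already partitioned: positions `< l` hold values
`≤ pivot`, positions `> r` values `≥ pivot`. Some position `≤ r` holds a value `≤ pivot` (initially
the pivot itself, later the value just swapped leftwards), so the right scan stops at such a value
and never falls off the array. Each round shrinks the window, and swaps only permute the entries. -/

variable {α : Type*} [LinearOrder α] [Inhabited α]

/-- Advance the left pointer while `A[ℓ] < pivot` (fuel-bounded). -/
def hoareFindL (A : Array α) (pivot : α) : ℕ → ℕ → ℕ
  | 0, l => l
  | fuel + 1, l =>
      if l < A.size ∧ A[l]! < pivot then hoareFindL A pivot fuel (l + 1) else l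

/-- Retreat the right pointer while `A[r] > pivot` (fuel-bounded). -/
def hoareFindR (A : Array α) (pivot : α) : ℕ → ℕ → ℕ
  | 0, r => r
  | fuel + 1, r =>
      if pivot < A[r]! then hoareFindR A pivot fuel (r - 1) else r

/-- Main loop of Hoare's partitioning: while `ℓ < r`, advance `ℓ` while
`A[ℓ] < pivot`, retreat `r` while `A[r] > pivot`, and if still `ℓ < r`, swap
`A[ℓ]` and `A[r]` and advance both pointers; return `ℓ`. -/
def hoareLoop (pivot : α) : ℕ → Array α → ℕ → ℕ → Array α × ℕ
  | 0, A, l, _ => (A, l)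
  | fuel + 1, A, l, r =>
      let l' := hoareFindL A pivot A.size l
      let r' := hoareFindR A pivot A.size r
      if l' < r' then hoareLoop pivot fuel (A.swapIfInBounds l' r') (l' + 1) (r' - 1)
      else (A, l')

/-- Hoare's partitioning procedure. -/
def hoarePartition (A : Array α) (pivot : α) : Array α × ℕ :=
  hoareLoop pivot A.size A 0 (A.size - 1)

lemma Array.getElem!_swapIfInBounds {β : Type*} [Inhabited β] (A : Array β) {i j : ℕ}
    (hi : i < A.size) (hj : j < A.size) {k : ℕ} (hk : k < A.size) :
    (A.swapIfInBounds i j)[k]! = if k = i then A[j]! else if k = j then A[i]! else A[k]! := by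
  grind

section FindL

variable (A : Array α) (pivot : α)

lemma le_hoareFindL : ∀ fuel l, l ≤ hoareFindL A pivot fuel l
  | 0, _ => le_rfl
  | fuel + 1, l => by
    rw [hoareFindL]
    split_ifs
    · exact (le_hoareFindL fuel (l + 1)).trans' l.le_succ
    · exact le_rfl

lemma hoareFindL_le_size : ∀ fuel l, l ≤ A.size → hoareFindL A pivot fuel l ≤ A.size
  | 0, _, hl => hl
  | fuel + 1, l, hl => by
    rw [hoareFindL]
    split_ifs with h
    · exact hoareFindL_le_size fuel (l + 1) h.1
    · exact hl

lemma getElem!_lt_pivot_of_lt_hoareFindL :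
    ∀ fuel l j, l ≤ j → j < hoareFindL A pivot fuel l → A[j]! < pivot
  | 0, _, _, hlj, hj => absurd hj hlj.not_gt
  | fuel + 1, l, j, hlj, hj => by
    rw [hoareFindL] at hj
    split_ifs at hj with h
    · rcases hlj.eq_or_lt with rfl | hlj
      · exact h.2
      · exact getElem!_lt_pivot_of_lt_hoareFindL fuel (l + 1) j hlj hj
    · exact absurd hj hlj.not_gt

lemma pivot_le_getElem!_hoareFindL : ∀ fuel l, A.size ≤ fuel + l →
    hoareFindL A pivot fuel l < A.size → pivot ≤ A[hoareFindL A pivot fuel l]!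
  | 0, l, hf, hlt => absurd hlt (by simpa [hoareFindL] using hf)
  | fuel + 1, l, hf, hlt => by
    rw [hoareFindL] at hlt ⊢
    split_ifs at hlt ⊢ with h
    · exact pivot_le_getElem!_hoareFindL fuel (l + 1) (by omega) hlt
    · exact not_lt.mp fun h' => h ⟨hlt, h'⟩

end FindL

section FindR

variable (A : Array α) (pivot : α)

lemma hoareFindR_le : ∀ fuel r, hoareFindR A pivot fuel r ≤ r
  | 0, _ => le_rfl
  | fuel + 1, r => by
    rw [hoareFindR]
    split_ifs
    · exact (hoareFindR_le fuel (r - 1)).trans (r.sub_le 1)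
    · exact le_rfl

lemma pivot_lt_getElem!_of_hoareFindR_lt :
    ∀ fuel r j, hoareFindR A pivot fuel r < j → j ≤ r → pivot < A[j]!
  | 0, _, _, hj, hjr => absurd hj hjr.not_gt
  | fuel + 1, r, j, hj, hjr => by
    rw [hoareFindR] at hj
    split_ifs at hj with h
    · rcases hjr.eq_or_lt with rfl | hjr
      · exact h
      · exact pivot_lt_getElem!_of_hoareFindR_lt fuel (r - 1) j hj (by omega)
    · exact absurd hj hjr.not_gt

variable {A pivot} {i : ℕ}

lemma le_hoareFindR (hi : A[i]! ≤ pivot) : ∀ fuel r, i ≤ r → i ≤ hoareFindR A pivot fuel r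
  | 0, _, hir => hir
  | fuel + 1, r, hir => by
    rw [hoareFindR]
    split_ifs with h
    · have hne : i ≠ r := by rintro rfl; exact h.not_ge hi
      exact le_hoareFindR hi fuel (r - 1) (by omega)
    · exact hir

lemma getElem!_hoareFindR_le_pivot (hi : A[i]! ≤ pivot) : ∀ fuel r, i ≤ r → r ≤ fuel + i →
    A[hoareFindR A pivot fuel r]! ≤ pivot
  | 0, r, hir, hf => by rwa [hoareFindR, le_antisymm (by omega) hir]
  | fuel + 1, r, hir, hf => by
    rw [hoareFindR]
    split_ifs with h
    · have hne : i ≠ r := by rintro rfl; exact h.not_ge hi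
      exact getElem!_hoareFindR_le_pivot hi fuel (r - 1) (by omega) (by omega)
    · exact not_lt.mp h

end FindR

def IsPartitionAt (pivot : α) (A : Array α) (p : ℕ) : Prop :=
  p ≤ A.size ∧ (∀ j < p, A[j]! ≤ pivot) ∧ ∀ j, p ≤ j → j < A.size → pivot ≤ A[j]!

structure HoareInvariant (pivot : α) (A : Array α) (l r : ℕ) : Prop where
  right_lt_size : r < A.size
  left_le_size : l ≤ A.size
  le_pivot : ∀ j < l, A[j]! ≤ pivot
  pivot_le : ∀ j, r < j → j < A.size → pivot ≤ A[j]!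
  exists_le_pivot : ∃ i ≤ r, A[i]! ≤ pivot

namespace HoareInvariant

variable {pivot : α} {A : Array α} {l r : ℕ}

lemma isPartitionAt_of_not_lt (h : HoareInvariant pivot A l r)
    (hstop : ¬ hoareFindL A pivot A.size l < hoareFindR A pivot A.size r) :
    IsPartitionAt pivot A (hoareFindL A pivot A.size l) := by
  obtain ⟨hr, hl, hleft, hright, i, hir, hi⟩ := h
  refine ⟨hoareFindL_le_size A pivot A.size l hl, fun j hj => ?_, fun j hj hjs => ?_⟩
  · rcases lt_or_ge j l with hjl | hjl
    · exact hleft j hjl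
    · exact (getElem!_lt_pivot_of_lt_hoareFindL A pivot A.size l j hjl hj).le
  · rcases lt_or_ge r j with hrj | hjr
    · exact hright j hrj hjs
    rcases lt_or_ge (hoareFindR A pivot A.size r) j with hrj' | hjr'
    · exact (pivot_lt_getElem!_of_hoareFindR_lt A pivot A.size r j hrj' hjr).le
    · obtain rfl : j = hoareFindL A pivot A.size l := by omega
      exact pivot_le_getElem!_hoareFindL A pivot A.size l (by omega) hjs

lemma step (h : HoareInvariant pivot A l r)
    (hlr : hoareFindL A pivot A.size l < hoareFindR A pivot A.size r) :
    HoareInvariant pivot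
      (A.swapIfInBounds (hoareFindL A pivot A.size l) (hoareFindR A pivot A.size r))
      (hoareFindL A pivot A.size l + 1) (hoareFindR A pivot A.size r - 1) := by
  obtain ⟨hr, hl, hleft, hright, i, hir, hi⟩ := h
  set l' := hoareFindL A pivot A.size l
  set r' := hoareFindR A pivot A.size r
  have hr' : r' ≤ r := hoareFindR_le A pivot A.size r
  have hl's : l' < A.size := by omega
  have hr's : r' < A.size := by omega
  have hl'_le : pivot ≤ A[l']! := pivot_le_getElem!_hoareFindL A pivot A.size l (by omega) hl's
  have hr'_le : A[r']! ≤ pivot := getElem!_hoareFindR_le_pivot hi A.size r hir (by omega)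
  have hget (k) (hk : k < A.size) := A.getElem!_swapIfInBounds hl's hr's hk
  refine ⟨by rw [Array.size_swapIfInBounds]; omega, by rw [Array.size_swapIfInBounds]; omega,
     fun j hj => ?_, fun j hj hjs => ?_, l', by omega, ?_⟩
  · rw [hget j (by omega)]
    split_ifs with hjl' hjr'
    · exact hr'_le
    · omega
    rcases lt_or_ge j l with hjl | hjl
    · exact hleft j hjl
    · exact (getElem!_lt_pivot_of_lt_hoareFindL A pivot A.size l j hjl (by omega)).le
  · rw [Array.size_swapIfInBounds] at hjs
    rw [hget j hjs]
    split_ifs with hjl' hjr'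
    · omega
    · exact hl'_le
    rcases lt_or_ge r j with hrj | hjr
    · exact hright j hrj hjs
    · exact (pivot_lt_getElem!_of_hoareFindR_lt A pivot A.size r j (by omega) hjr).le
  · simpa [hget l' hl's] using hr'_le

end HoareInvariant

lemma hoareLoop_spec (pivot : α) : ∀ fuel (A : Array α) l r, r - l < fuel →
    HoareInvariant pivot A l r →
    (hoareLoop pivot fuel A l r).1.toList.Perm A.toList ∧
      IsPartitionAt pivot (hoareLoop pivot fuel A l r).1 (hoareLoop pivot fuel A l r).2
  | 0, _, _, _, hf, _ => absurd hf (Nat.not_lt_zero _)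
  | fuel + 1, A, l, r, hf, h => by
    rw [hoareLoop]
    split_ifs with hlr
    · have hl' := le_hoareFindL A pivot A.size l
      have hr' := hoareFindR_le A pivot A.size r
      obtain ⟨hperm, hpart⟩ := hoareLoop_spec pivot fuel _ _ _ (by omega) (h.step hlr)
      exact ⟨hperm.trans (by simp), hpart⟩
    · exact ⟨List.Perm.refl _, h.isPartitionAt_of_not_lt hlr⟩

lemma hoareInvariant_init {A : Array α} {pivot : α} (hmem : pivot ∈ A.toList) :
    HoareInvariant pivot A 0 (A.size - 1) := by
  obtain ⟨i, hi, hpivot⟩ := List.mem_iff_getElem.mp hmem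
  rw [Array.length_toList] at hi
  refine ⟨by omega, by omega, fun j hj => absurd hj j.not_lt_zero, fun j _ _ => by omega,
    i, by omega, ?_⟩
  rw [getElem!_pos A i hi, ← Array.getElem_toList, hpivot]

/-- Correctness of Hoare's partitioning on an array containing the pivot
value: the returned index `p` is such that every element at a position `< p`
is `≤ pivot`, every element at a position `≥ p` is `≥ pivot`, and the
resulting array is a permutation of the input. -/
theorem hoarePartition_correct (A : Array α) (pivot : α)
    (hmem : pivot ∈ A.toList) :
    ((hoarePartition A pivot).1).toList.Perm A.toList ∧
    (hoarePartition A pivot).2 ≤ A.size ∧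
    (∀ j, j < (hoarePartition A pivot).2 →
        (hoarePartition A pivot).1[j]! ≤ pivot) ∧
    (∀ j, (hoarePartition A pivot).2 ≤ j → j < A.size →
        pivot ≤ (hoarePartition A pivot).1[j]!) := by
  rw [hoarePartition]
  have hinit := hoareInvariant_init hmem
  obtain ⟨hperm, hle, hleft, hright⟩ :=
    hoareLoop_spec pivot A.size A 0 (A.size - 1) ((Nat.sub_le _ 0).trans_lt hinit.right_lt_size) hinit
  have hsize := hperm.length_eq
  simp only [Array.length_toList] at hsize
  rw [hsize] at hle hright
  exact ⟨hperm, hle, hleft, hright⟩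
end
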